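/- arXiv:0807.2040 — 4 statements merged into one kernel-verified Lean document; each statement's English description precedes it below -/
import Mathlib

section
/- Let κ be an irreducible, integrable hyperkernel on a probability space (S, μ), and let f, g : S → [0,1] be measurable functions with f(x) ≤ g(x) for every x, satisfying f = 1 − e^{−S_κ(f)} and g = 1 − e^{−S_κ(g)} pointwise. Then either f is identically 0, or f = g. -/
open MeasureTheory ENNReal Filter Topology

/-- The nonlinear operator `S_κ` associated to a hyperkernel `κ = (κ_r)_{r ≥ 2}`;
here `κ m` plays the role of `κ_{m+2}`. -/
noncomputable def Sop {S : Type*} [MeasurableSpace S] (μ : Measure S)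
    (κ : (m : ℕ) → (Fin (m + 2) → S) → ℝ≥0∞) (f : S → ℝ) (x : S) : ℝ≥0∞ :=
  ∑' m : ℕ, ((m : ℝ≥0∞) + 2) *
    ∫⁻ y : Fin (m + 1) → S,
      κ m (Fin.cons x y) * ENNReal.ofReal (1 - ∏ i, (1 - f (y i)))
      ∂(Measure.pi fun _ => μ)

/-- The edge kernel `κ_e` of a hyperkernel. -/
noncomputable def edgeKernel {S : Type*} [MeasurableSpace S] (μ : Measure S)
    (κ : (m : ℕ) → (Fin (m + 2) → S) → ℝ≥0∞) (x y : S) : ℝ≥0∞ :=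
  ∑' m : ℕ, ((m : ℝ≥0∞) + 2) * ((m : ℝ≥0∞) + 1) *
    ∫⁻ z : Fin m → S, κ m (Fin.cons x (Fin.cons y z)) ∂(Measure.pi fun _ => μ)

/-- The linear operator `T_κ`. -/
noncomputable def Tlin {S : Type*} [MeasurableSpace S] (μ : Measure S)
    (κ : (m : ℕ) → (Fin (m + 2) → S) → ℝ≥0∞) (f : S → ℝ) (x : S) : ℝ≥0∞ :=
  ∫⁻ y, edgeKernel μ κ x y * ENNReal.ofReal (f y) ∂μ

/-- All kernels of the family are measurable. -/
def HyperkernelMeasurable {S : Type*} [MeasurableSpace S]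
    (κ : (m : ℕ) → (Fin (m + 2) → S) → ℝ≥0∞) : Prop :=
  ∀ m, Measurable (κ m)

/-- Each kernel is invariant under all permutations of its arguments. -/
def HyperkernelSymm {S : Type*} [MeasurableSpace S]
    (κ : (m : ℕ) → (Fin (m + 2) → S) → ℝ≥0∞) : Prop :=
  ∀ m (σ : Equiv.Perm (Fin (m + 2))) (v : Fin (m + 2) → S), κ m (v ∘ σ) = κ m v

/-- Integrability of the hyperkernel: `∑_{r≥2} r ∫_{S^r} κ_r < ∞`. -/
def HyperkernelIntegrable {S : Type*} [MeasurableSpace S] (μ : Measure S)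
    (κ : (m : ℕ) → (Fin (m + 2) → S) → ℝ≥0∞) : Prop :=
  ∑' m : ℕ, ((m : ℝ≥0∞) + 2) *
    ∫⁻ v : Fin (m + 2) → S, κ m v ∂(Measure.pi fun _ => μ) ≠ ⊤

/-- `expNeg a = e^{-a}` for `a ∈ [0,∞]`, with `e^{-∞} = 0`. -/
noncomputable def expNeg (a : ℝ≥0∞) : ℝ := if a = ⊤ then 0 else Real.exp (-a.toReal)

/-- The operator `Φ_κ(f) = 1 - e^{-S_κ(f)}`. -/
noncomputable def Phi {S : Type*} [MeasurableSpace S] (μ : Measure S)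
    (κ : (m : ℕ) → (Fin (m + 2) → S) → ℝ≥0∞) (f : S → ℝ) (x : S) : ℝ :=
  1 - expNeg (Sop μ κ f x)

/-- Irreducibility of the hyperkernel. -/
def HyperkernelIrreducible {S : Type*} [MeasurableSpace S] (μ : Measure S)
    (κ : (m : ℕ) → (Fin (m + 2) → S) → ℝ≥0∞) : Prop :=
  ∀ A : Set S, MeasurableSet A →
    (∀ᵐ p ∂(μ.prod μ), p ∈ A ×ˢ Aᶜ → edgeKernel μ κ p.1 p.2 = 0) →
    μ A = 0 ∨ μ Aᶜ = 0

/-- The decreasing iterates `ρ_0 = 1`, `ρ_{t+1} = Φ_κ(ρ_t)`. -/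
noncomputable def rhoSeq {S : Type*} [MeasurableSpace S] (μ : Measure S)
    (κ : (m : ℕ) → (Fin (m + 2) → S) → ℝ≥0∞) : ℕ → S → ℝ
  | 0 => fun _ => 1
  | t + 1 => Phi μ κ (rhoSeq μ κ t)

/-- The pointwise limit `ρ_κ` of the decreasing iterates `Φ_κ^t(1)`. -/
noncomputable def rhoFun {S : Type*} [MeasurableSpace S] (μ : Measure S)
    (κ : (m : ℕ) → (Fin (m + 2) → S) → ℝ≥0∞) : S → ℝ :=
  fun x => ⨅ t : ℕ, rhoSeq μ κ t x

/-- The condition `‖T_κ‖ > 1` on the `L²(μ)` operator norm of `T_κ`. -/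
def TopNormGtOne {S : Type*} [MeasurableSpace S] (μ : Measure S)
    (κ : (m : ℕ) → (Fin (m + 2) → S) → ℝ≥0∞) : Prop :=
  ∃ h : S → ℝ, Measurable h ∧ (∀ x, 0 ≤ h x) ∧
    (∫⁻ x, ENNReal.ofReal (h x) ^ 2 ∂μ) ≤ 1 ∧ 1 < ∫⁻ x, (Tlin μ κ h x) ^ 2 ∂μ

/-!
Let `A = {f > 0}`. Off `A` the fixed-point equation forces `S_κ(f) = 0`, and since
`f(y₁) ≤ 1 - ∏ᵢ (1 - f(yᵢ))` this also kills `T_κ(f)(x) = ∫ κ_e(x, y) f(y) dμ(y)`. By the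
symmetry of `κ_e`, the kernel vanishes a.e. on `A × Aᶜ`, so irreducibility gives `μ A = 0` or
`μ Aᶜ = 0`. In the first case `f = 0` a.e., hence `S_κ(f) = S_κ(0) = 0` and `f ≡ 0`.

In the second case `f > 0` a.e. Symmetrizing each `κ_r` over the position of the distinguished
vertex writes `∫ u S_κ(v)` as an integral of `κ_r` against
`∑_j u(x_j) (1 - ∏_{k ≠ j} (1 - v(x_k)))`, and an elementary inequality for this expression gives
`∫ f S_κ(g) ≤ ∫ g S_κ(f)` whenever `f ≤ g`. On the other hand `S_κ(h) = -log (1 - h)` for a fixed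
point `h`, and `t ↦ -log (1 - t) / t` is strictly increasing by strict concavity of `log`, so
`g S_κ(f) ≤ f S_κ(g)` pointwise with equality only where `f = g`. Integrability makes these
integrals finite, hence `f = g` a.e., and then everywhere because `S_κ` only sees the a.e. class.
-/

open Finset

section ProductInequalities

variable {ι : Type*} [DecidableEq ι]

theorem le_one_sub_prod_one_sub {s : Finset ι} {v : ι → ℝ} (hv0 : ∀ k ∈ s, 0 ≤ v k)
    (hv1 : ∀ k ∈ s, v k ≤ 1) {i : ι} (hi : i ∈ s) : v i ≤ 1 - ∏ k ∈ s, (1 - v k) := by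
  rw [← mul_prod_erase s _ hi]
  have h0 : 0 ≤ ∏ k ∈ s.erase i, (1 - v k) :=
    prod_nonneg fun k hk => sub_nonneg.2 (hv1 k (mem_of_mem_erase hk))
  have h1 : ∏ k ∈ s.erase i, (1 - v k) ≤ 1 :=
    prod_le_one (fun k hk => sub_nonneg.2 (hv1 k (mem_of_mem_erase hk)))
      fun k hk => sub_le_self _ (hv0 k (mem_of_mem_erase hk))
  nlinarith [hv0 i hi, hv1 i hi]

theorem prod_sub_prod_le_sum_mul_prod_erase (s : Finset ι) {a b : ι → ℝ}
    (hb : ∀ i ∈ s, 0 ≤ b i) (hba : ∀ i ∈ s, b i ≤ a i) :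
    ∏ i ∈ s, a i - ∏ i ∈ s, b i ≤ ∑ i ∈ s, (a i - b i) * ∏ k ∈ s.erase i, a k := by
  induction s using Finset.induction_on with
  | empty => simp
  | insert t s ht ih =>
    simp only [mem_insert, forall_eq_or_imp] at hb hba
    have hB : 0 ≤ ∏ i ∈ s, b i := prod_nonneg hb.2
    have hBA : ∏ i ∈ s, b i ≤ ∏ i ∈ s, a i := prod_le_prod hb.2 hba.2
    have hinner : ∑ i ∈ s, (a i - b i) * ∏ k ∈ (insert t s).erase i, a k
        = a t * ∑ i ∈ s, (a i - b i) * ∏ k ∈ s.erase i, a k := by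
      rw [mul_sum]
      refine sum_congr rfl fun i hi => ?_
      rw [erase_insert_of_ne (ne_of_mem_of_not_mem hi ht).symm, prod_insert (by simp [ht])]
      ring
    rw [prod_insert ht, prod_insert ht, sum_insert ht, erase_insert ht, hinner]
    nlinarith [ih hb.2 hba.2, mul_le_mul_of_nonneg_left (ih hb.2 hba.2) (hb.1.trans hba.1)]

theorem sum_one_sub_mul_prod_erase_le (s : Finset ι) {a : ι → ℝ}
    (ha0 : ∀ i ∈ s, 0 ≤ a i) (ha1 : ∀ i ∈ s, a i ≤ 1) :
    ∑ j ∈ s, (1 - a j) * ∏ k ∈ s.erase j, a k ≤ 1 - ∏ k ∈ s, a k := by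
  induction s using Finset.induction_on with
  | empty => simp
  | insert t s ht ih =>
    simp only [mem_insert, forall_eq_or_imp] at ha0 ha1
    have hinner : ∑ j ∈ s, (1 - a j) * ∏ k ∈ (insert t s).erase j, a k
        = a t * ∑ j ∈ s, (1 - a j) * ∏ k ∈ s.erase j, a k := by
      rw [mul_sum]
      refine sum_congr rfl fun j hj => ?_
      rw [erase_insert_of_ne (ne_of_mem_of_not_mem hj ht).symm, prod_insert (by simp [ht])]
      ring
    have hA : ∏ k ∈ s, a k ≤ 1 := prod_le_one ha0.2 ha1.2
    rw [prod_insert ht, sum_insert ht, erase_insert ht, hinner]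
    nlinarith [mul_le_mul_of_nonneg_left (ih ha0.2 ha1.2) ha0.1]

theorem sum_mul_one_sub_prod_erase_le [Fintype ι] {f g : ι → ℝ} (hf0 : ∀ i, 0 ≤ f i)
    (hfg : ∀ i, f i ≤ g i) (hg1 : ∀ i, g i ≤ 1) :
    ∑ j, f j * (1 - ∏ k ∈ univ.erase j, (1 - g k)) ≤
      ∑ j, g j * (1 - ∏ k ∈ univ.erase j, (1 - f k)) := by
  calc ∑ j, f j * (1 - ∏ k ∈ univ.erase j, (1 - g k))
      = ∑ j, f j * (1 - ∏ k ∈ univ.erase j, (1 - f k)) +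
          ∑ j, f j * (∏ k ∈ univ.erase j, (1 - f k) - ∏ k ∈ univ.erase j, (1 - g k)) := by
        rw [← sum_add_distrib]; exact sum_congr rfl fun j _ => by ring
    _ ≤ ∑ j, f j * (1 - ∏ k ∈ univ.erase j, (1 - f k)) +
          ∑ j, f j * ∑ i ∈ univ.erase j,
            (g i - f i) * ∏ k ∈ (univ.erase j).erase i, (1 - f k) := by
        gcongr with j _
        · exact hf0 j
        · refine (prod_sub_prod_le_sum_mul_prod_erase (univ.erase j)
            (a := fun k => 1 - f k) (b := fun k => 1 - g k) (fun i _ => by linarith [hg1 i])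
            (fun i _ => by linarith [hfg i])).trans_eq (sum_congr rfl fun i _ => by ring)
    _ = ∑ j, f j * (1 - ∏ k ∈ univ.erase j, (1 - f k)) +
          ∑ i, (g i - f i) * ∑ j ∈ univ.erase i,
            (1 - (1 - f j)) * ∏ k ∈ (univ.erase i).erase j, (1 - f k) := by
        simp only [mul_sum, _root_.sub_sub_cancel]
        rw [sum_comm' (t' := univ) (s' := fun i => univ.erase i) (by simp [and_comm, eq_comm])]
        exact congrArg _ (sum_congr rfl fun i _ => sum_congr rfl fun j _ => by
          rw [erase_right_comm]; ring)
    _ ≤ ∑ j, f j * (1 - ∏ k ∈ univ.erase j, (1 - f k)) +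
          ∑ i, (g i - f i) * (1 - ∏ k ∈ univ.erase i, (1 - f k)) := by
        gcongr with i _
        · linarith [hfg i]
        · exact sum_one_sub_mul_prod_erase_le _ (fun k _ => by linarith [hfg k, hg1 k])
            (fun k _ => by linarith [hf0 k])
    _ = ∑ j, g j * (1 - ∏ k ∈ univ.erase j, (1 - f k)) := by
        rw [← sum_add_distrib]; exact sum_congr rfl fun j _ => by ring

end ProductInequalities

theorem mul_neg_log_one_sub_lt_mul {s t : ℝ} (hs : 0 < s) (hst : s < t) (ht : t < 1) :
    t * -Real.log (1 - s) < s * -Real.log (1 - t) := by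
  have key := strictConcaveOn_log_Ioi.secant_strict_mono (a := 1) (x := 1 - t) (y := 1 - s)
    (Set.mem_Ioi.2 one_pos) (by simp; linarith) (by simp; linarith) (by linarith) (by linarith)
    (by linarith)
  rw [Real.log_one, sub_zero, sub_zero, sub_sub_cancel_left, sub_sub_cancel_left, div_neg, div_neg,
    neg_lt_neg_iff, div_lt_div_iff₀ (by linarith) (by linarith)] at key
  linarith

theorem Fin.prod_univ_erase {M : Type*} [CommMonoid M] {n : ℕ} (j : Fin (n + 1))
    (F : Fin (n + 1) → M) : ∏ k ∈ univ.erase j, F k = ∏ i, F (j.succAbove i) := by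
  have : univ.erase j = univ.map (Fin.succAboveEmb j) := by
    ext k
    simp [Fin.exists_succAbove_eq_iff]
  rw [this, prod_map]
  rfl

theorem Fin.cons_cons_comp_swap {α : Type*} {n : ℕ} (x y : α) (z : Fin n → α) :
    (Fin.cons y (Fin.cons x z) : Fin (n + 2) → α) ∘ Equiv.swap 0 1 = Fin.cons x (Fin.cons y z) := by
  funext k
  refine Fin.cases ?_ (Fin.cases ?_ fun i => ?_) k
  · simp
  · simp
  · simp [Equiv.swap_apply_of_ne_of_ne (Fin.succ_ne_zero _) (Fin.succ_succ_ne_one i)]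

section PiMeasure

variable {α : Type*} [MeasurableSpace α]

theorem measurable_finCons {n : ℕ} :
    Measurable (fun p : α × (Fin n → α) => (Fin.cons p.1 p.2 : Fin (n + 1) → α)) := by
  convert (MeasurableEquiv.piFinSuccAbove (fun _ => α) 0).symm.measurable using 2 with p
  simp [MeasurableEquiv.piFinSuccAbove_symm_apply, Fin.insertNthEquiv, Fin.insertNth_zero']

@[fun_prop]
theorem Measurable.finCons {β : Type*} [MeasurableSpace β] {n : ℕ} {f : β → α}
    {g : β → Fin n → α} (hf : Measurable f) (hg : Measurable g) :
    Measurable (fun x => (Fin.cons (f x) (g x) : Fin (n + 1) → α)) :=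
  measurable_finCons.comp (hf.prodMk hg)

variable (μ : Measure α) [SigmaFinite μ]

theorem lintegral_pi_finCons {n : ℕ} {F : (Fin (n + 1) → α) → ℝ≥0∞} (hF : Measurable F) :
    ∫⁻ w, F w ∂Measure.pi (fun _ => μ) =
      ∫⁻ x, ∫⁻ y, F (Fin.cons x y) ∂Measure.pi (fun _ => μ) ∂μ := by
  rw [← lintegral_prod (fun p => F (Fin.cons p.1 p.2)) (hF.comp measurable_finCons).aemeasurable,
    ← ((measurePreserving_piFinSuccAbove (fun _ => μ) 0).symm).lintegral_comp hF]
  refine lintegral_congr fun p => congrArg F ?_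
  simp [MeasurableEquiv.piFinSuccAbove_symm_apply, Fin.insertNthEquiv, Fin.insertNth_zero']

theorem lintegral_pi_comp_perm {n : ℕ} (σ : Equiv.Perm (Fin n))
    {F : (Fin n → α) → ℝ≥0∞} (hF : Measurable F) :
    ∫⁻ w, F (w ∘ σ) ∂Measure.pi (fun _ => μ) = ∫⁻ w, F w ∂Measure.pi (fun _ => μ) := by
  rw [← (measurePreserving_piCongrLeft (fun _ => μ) σ.symm).lintegral_comp hF]
  refine lintegral_congr fun w => congrArg F (funext fun i => ?_)
  simpa [MeasurableEquiv.piCongrLeft] using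
    (Equiv.piCongrLeft_apply_apply (fun _ => α) σ.symm w (σ i)).symm

end PiMeasure

section Hyperkernel

variable {S : Type*} [MeasurableSpace S] {μ : Measure S}
  {κ : (m : ℕ) → (Fin (m + 2) → S) → ℝ≥0∞}

theorem measurable_Sop_integrand (hκ : HyperkernelMeasurable κ) {f : S → ℝ} (hf : Measurable f)
    (m : ℕ) : Measurable fun p : S × (Fin (m + 1) → S) =>
      κ m (Fin.cons p.1 p.2) * ENNReal.ofReal (1 - ∏ i, (1 - f (p.2 i))) := by
  have := hκ m
  fun_prop

theorem measurable_Sop [SigmaFinite μ] (hκ : HyperkernelMeasurable κ) {f : S → ℝ}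
    (hf : Measurable f) : Measurable (Sop μ κ f) :=
  Measurable.tsum fun m => (measurable_Sop_integrand hκ hf m).lintegral_prod_right'.const_mul _

theorem measurable_edgeKernel [SigmaFinite μ] (hκ : HyperkernelMeasurable κ) :
    Measurable (Function.uncurry (edgeKernel μ κ)) := by
  refine Measurable.tsum fun m => Measurable.const_mul ?_ _
  have := hκ m
  exact Measurable.lintegral_prod_right (by fun_prop)

theorem edgeKernel_comm (hsymm : HyperkernelSymm κ) (x y : S) :
    edgeKernel μ κ x y = edgeKernel μ κ y x := by
  refine tsum_congr fun m => congrArg _ (lintegral_congr fun z => ?_)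
  rw [← Fin.cons_cons_comp_swap, hsymm]

theorem Sop_congr_ae [SigmaFinite μ] {f g : S → ℝ} (h : f =ᵐ[μ] g) : Sop μ κ f = Sop μ κ g := by
  funext x
  refine tsum_congr fun m => congrArg _ (lintegral_congr_ae ?_)
  filter_upwards [Measure.ae_eq_pi fun _ : Fin (m + 1) => h] with y hy
  simp only [congrFun hy]

theorem Sop_zero : Sop μ κ 0 = 0 := by
  funext x
  simp [Sop]

theorem lintegral_Sop_le [SigmaFinite μ] (hκ : HyperkernelMeasurable κ) {f : S → ℝ}
    (hf : Measurable f) (hf1 : ∀ x, f x ≤ 1) :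
    ∫⁻ x, Sop μ κ f x ∂μ ≤
      ∑' m : ℕ, ((m : ℝ≥0∞) + 2) * ∫⁻ v, κ m v ∂Measure.pi (fun _ => μ) := by
  have hF := measurable_Sop_integrand hκ hf
  unfold Sop
  rw [lintegral_tsum fun m => ((hF m).lintegral_prod_right'.const_mul _).aemeasurable]
  refine ENNReal.tsum_le_tsum fun m => ?_
  rw [lintegral_const_mul _ (hF m).lintegral_prod_right', lintegral_pi_finCons μ (hκ m)]
  gcongr with x y
  refine mul_le_of_le_one_right' (ENNReal.ofReal_le_one.2 (sub_le_self _ ?_))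
  exact prod_nonneg fun i _ => sub_nonneg.2 (hf1 _)

theorem expNeg_of_ne_top {a : ℝ≥0∞} (ha : a ≠ ⊤) : expNeg a = Real.exp (-a.toReal) := if_neg ha

theorem expNeg_eq_one_iff {a : ℝ≥0∞} : expNeg a = 1 ↔ a = 0 := by
  by_cases ha : a = ⊤
  · simp [expNeg, ha]
  · rw [expNeg_of_ne_top ha, Real.exp_eq_one_iff, neg_eq_zero, ENNReal.toReal_eq_zero_iff]
    simp [ha]

theorem ofReal_neg_log_expNeg {a : ℝ≥0∞} (ha : a ≠ ⊤) :
    ENNReal.ofReal (-Real.log (expNeg a)) = a := by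
  rw [expNeg_of_ne_top ha, Real.log_exp, neg_neg, ENNReal.ofReal_toReal ha]

theorem Phi_eq_zero_iff {f : S → ℝ} {x : S} : Phi μ κ f x = 0 ↔ Sop μ κ f x = 0 := by
  rw [Phi, sub_eq_zero, eq_comm, expNeg_eq_one_iff]

section FixedPoint

variable {h : S → ℝ} {x : S}

theorem Sop_eq_ofReal_neg_log (hfix : h x = Phi μ κ h x) (hS : Sop μ κ h x ≠ ⊤) :
    Sop μ κ h x = ENNReal.ofReal (-Real.log (1 - h x)) := by
  rw [hfix, Phi, _root_.sub_sub_cancel, ofReal_neg_log_expNeg hS]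

theorem lt_one_of_Sop_ne_top (hfix : h x = Phi μ κ h x) (hS : Sop μ κ h x ≠ ⊤) : h x < 1 := by
  rw [hfix, Phi, expNeg_of_ne_top hS]
  linarith [Real.exp_pos (-(Sop μ κ h x).toReal)]

end FixedPoint

theorem Tlin_eq_tsum [SigmaFinite μ] (hκ : HyperkernelMeasurable κ) {f : S → ℝ}
    (hf : Measurable f) (x : S) :
    Tlin μ κ f x = ∑' m : ℕ, ((m : ℝ≥0∞) + 2) * ((m : ℝ≥0∞) + 1) *
      ∫⁻ w : Fin (m + 1) → S, κ m (Fin.cons x w) * ENNReal.ofReal (f (w 0))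
        ∂Measure.pi (fun _ => μ) := by
  have hF : ∀ m, Measurable fun w : Fin (m + 1) → S =>
      κ m (Fin.cons x w) * ENNReal.ofReal (f (w 0)) := fun m => by
    have := hκ m
    fun_prop
  have hG : ∀ m, Measurable fun y => ∫⁻ z : Fin m → S, κ m (Fin.cons x (Fin.cons y z))
      ∂Measure.pi (fun _ => μ) := fun m => by
    have := hκ m
    exact Measurable.lintegral_prod_right (by fun_prop)
  simp only [Tlin, edgeKernel, ← ENNReal.tsum_mul_right]
  rw [lintegral_tsum fun m => by have := hG m; fun_prop]
  refine tsum_congr fun m => ?_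
  have := hκ m
  rw [lintegral_pi_finCons μ (hF m),
    ← lintegral_const_mul _ (Measurable.lintegral_prod_right (by fun_prop))]
  refine lintegral_congr fun y => ?_
  rw [mul_assoc, ← lintegral_mul_const _ (by fun_prop)]
  simp only [Fin.cons_zero]

theorem Tlin_eq_zero_of_Sop_eq_zero [SigmaFinite μ] (hκ : HyperkernelMeasurable κ) {f : S → ℝ}
    (hf : Measurable f) (hf0 : ∀ x, 0 ≤ f x) (hf1 : ∀ x, f x ≤ 1) {x : S}
    (hS : Sop μ κ f x = 0) : Tlin μ κ f x = 0 := by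
  rw [Tlin_eq_tsum hκ hf, ENNReal.tsum_eq_zero]
  intro m
  have hm := ENNReal.tsum_eq_zero.1 hS m
  rw [mul_eq_zero, or_iff_right (by positivity)] at hm
  refine mul_eq_zero_of_right _ (le_antisymm ((lintegral_mono fun w => ?_).trans hm.le) zero_le)
  gcongr
  exact le_one_sub_prod_one_sub (fun k _ => hf0 _) (fun k _ => hf1 _) (mem_univ 0)

theorem ae_edgeKernel_eq_zero_of_Tlin_eq_zero [SigmaFinite μ] (hκ : HyperkernelMeasurable κ)
    (hsymm : HyperkernelSymm κ) {f : S → ℝ} (hf : Measurable f) {A : Set S}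
    (hA : MeasurableSet A) (hfA : ∀ x ∈ A, 0 < f x) (hT : ∀ x ∉ A, Tlin μ κ f x = 0) :
    ∀ᵐ p ∂μ.prod μ, p ∈ A ×ˢ Aᶜ → edgeKernel μ κ p.1 p.2 = 0 := by
  have hE := measurable_edgeKernel (μ := μ) hκ
  have hP : MeasurableSet {p : S × S | p ∈ A ×ˢ Aᶜ → edgeKernel μ κ p.1 p.2 = 0} :=
    ((measurableSet_setOfPred.1 (hA.prod hA.compl)).imp
      (measurableSet_setOfPred.1 (measurableSet_eq_fun hE measurable_const))).setOf
  rw [Measure.ae_prod_iff_ae_ae hP, Measure.ae_ae_comm hP]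
  refine ae_of_all _ fun y => ?_
  by_cases hy : y ∈ A
  · exact ae_of_all _ fun x hx => absurd hy hx.2
  have hzero := (lintegral_eq_zero_iff (by fun_prop)).1 (hT y hy)
  filter_upwards [hzero] with x hx ⟨hxA, _⟩
  rw [edgeKernel_comm hsymm]
  exact (mul_eq_zero.1 hx).resolve_right (ENNReal.ofReal_pos.2 (hfA x hxA)).ne'

section Symmetrization

variable [SigmaFinite μ] {u v : S → ℝ}

theorem lintegral_ofReal_mul_Sop_eq_tsum (hκ : HyperkernelMeasurable κ) (hu : Measurable u)
    (hv : Measurable v) (hu0 : ∀ x, 0 ≤ u x) :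
    ∫⁻ x, ENNReal.ofReal (u x) * Sop μ κ v x ∂μ = ∑' m : ℕ, ((m : ℝ≥0∞) + 2) *
      ∫⁻ w, κ m w * ENNReal.ofReal (u (w 0) * (1 - ∏ k ∈ univ.erase 0, (1 - v (w k))))
        ∂Measure.pi (fun _ => μ) := by
  have hF : ∀ m, Measurable fun x => ∫⁻ y : Fin (m + 1) → S,
      κ m (Fin.cons x y) * ENNReal.ofReal (1 - ∏ i, (1 - v (y i))) ∂Measure.pi (fun _ => μ) :=
    fun m => (measurable_Sop_integrand hκ hv m).lintegral_prod_right'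
  unfold Sop
  simp_rw [← ENNReal.tsum_mul_left]
  refine (lintegral_tsum fun m => ?_).trans (tsum_congr fun m => ?_)
  · exact (hu.ennreal_ofReal.mul ((hF m).const_mul _)).aemeasurable
  have := hκ m
  simp_rw [mul_left_comm (ENNReal.ofReal _)]
  rw [lintegral_const_mul' _ _ (by simp), lintegral_pi_finCons μ (by fun_prop)]
  congr 1
  refine lintegral_congr fun x => ?_
  rw [← lintegral_const_mul' _ _ ENNReal.ofReal_ne_top]
  refine lintegral_congr fun y => ?_
  rw [Fin.cons_zero, Fin.prod_univ_erase, ENNReal.ofReal_mul (hu0 x)]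
  simp only [Fin.succAbove_zero, Fin.cons_succ]
  ring

theorem lintegral_kernel_mul_erase_eq (hκ : HyperkernelMeasurable κ) (hsymm : HyperkernelSymm κ)
    (hu : Measurable u) (hv : Measurable v) (m : ℕ) (j : Fin (m + 2)) :
    ∫⁻ w, κ m w * ENNReal.ofReal (u (w j) * (1 - ∏ k ∈ univ.erase j, (1 - v (w k))))
        ∂Measure.pi (fun _ => μ) =
      ∫⁻ w, κ m w * ENNReal.ofReal (u (w 0) * (1 - ∏ k ∈ univ.erase 0, (1 - v (w k))))
        ∂Measure.pi (fun _ => μ) := by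
  have := hκ m
  rw [← lintegral_pi_comp_perm μ (Equiv.swap 0 j) (by fun_prop)]
  refine lintegral_congr fun w => ?_
  rw [hsymm, Function.comp_apply, Equiv.swap_apply_right]
  congr 4
  refine prod_equiv (Equiv.swap 0 j) (fun k => ?_) fun k _ => rfl
  simp [Equiv.swap_apply_eq_iff]

theorem lintegral_ofReal_mul_Sop (hκ : HyperkernelMeasurable κ) (hsymm : HyperkernelSymm κ)
    (hu : Measurable u) (hv : Measurable v) (hu0 : ∀ x, 0 ≤ u x) (hv0 : ∀ x, 0 ≤ v x)
    (hv1 : ∀ x, v x ≤ 1) :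
    ∫⁻ x, ENNReal.ofReal (u x) * Sop μ κ v x ∂μ = ∑' m : ℕ,
      ∫⁻ w, κ m w * ENNReal.ofReal (∑ j, u (w j) * (1 - ∏ k ∈ univ.erase j, (1 - v (w k))))
        ∂Measure.pi (fun _ => μ) := by
  rw [lintegral_ofReal_mul_Sop_eq_tsum hκ hu hv hu0]
  refine tsum_congr fun m => ?_
  have := hκ m
  calc ((m : ℝ≥0∞) + 2) * ∫⁻ w, κ m w *
        ENNReal.ofReal (u (w 0) * (1 - ∏ k ∈ univ.erase 0, (1 - v (w k))))
        ∂Measure.pi (fun _ => μ)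
      = ∑ j : Fin (m + 2), ∫⁻ w, κ m w *
          ENNReal.ofReal (u (w j) * (1 - ∏ k ∈ univ.erase j, (1 - v (w k))))
          ∂Measure.pi (fun _ => μ) := by
        rw [sum_congr rfl fun j _ => lintegral_kernel_mul_erase_eq hκ hsymm hu hv m j, sum_const,
          card_univ, Fintype.card_fin, nsmul_eq_mul]
        push_cast
        ring
    _ = _ := by
        rw [← lintegral_finsetSum _ fun j _ => by fun_prop]
        refine lintegral_congr fun w => ?_
        rw [← mul_sum, ENNReal.ofReal_sum_of_nonneg fun j _ => mul_nonneg (hu0 _) (sub_nonneg.2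
          (prod_le_one (fun k _ => sub_nonneg.2 (hv1 _)) fun k _ => sub_le_self _ (hv0 _)))]

theorem lintegral_ofReal_mul_Sop_le (hκ : HyperkernelMeasurable κ) (hsymm : HyperkernelSymm κ)
    {f g : S → ℝ} (hf : Measurable f) (hg : Measurable g) (hf0 : ∀ x, 0 ≤ f x)
    (hfg : ∀ x, f x ≤ g x) (hg1 : ∀ x, g x ≤ 1) :
    ∫⁻ x, ENNReal.ofReal (f x) * Sop μ κ g x ∂μ ≤ ∫⁻ x, ENNReal.ofReal (g x) * Sop μ κ f x ∂μ := by
  have hg0 x := (hf0 x).trans (hfg x)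
  have hf1 x := (hfg x).trans (hg1 x)
  rw [lintegral_ofReal_mul_Sop hκ hsymm hf hg hf0 hg0 hg1,
    lintegral_ofReal_mul_Sop hκ hsymm hg hf hg0 hf0 hf1]
  exact ENNReal.tsum_le_tsum fun m => lintegral_mono fun w => mul_le_mul_right
    (ENNReal.ofReal_le_ofReal (sum_mul_one_sub_prod_erase_le (fun _ => hf0 _) (fun _ => hfg _)
      (fun _ => hg1 _))) _

end Symmetrization

theorem ae_Sop_ne_top [SigmaFinite μ] (hκ : HyperkernelMeasurable κ)
    (hint : HyperkernelIntegrable μ κ) {f : S → ℝ} (hf : Measurable f) (hf1 : ∀ x, f x ≤ 1) :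
    ∀ᵐ x ∂μ, Sop μ κ f x ≠ ⊤ :=
  (ae_lt_top (measurable_Sop hκ hf) (ne_top_of_le_ne_top hint (lintegral_Sop_le hκ hf hf1))).mono
    fun _ hx => hx.ne

theorem ofReal_mul_ofReal_neg_log_lt {s t : ℝ} (hs : 0 < s) (hst : s < t) (ht : t < 1) :
    ENNReal.ofReal t * ENNReal.ofReal (-Real.log (1 - s)) <
      ENNReal.ofReal s * ENNReal.ofReal (-Real.log (1 - t)) := by
  rw [← ENNReal.ofReal_mul (hs.trans hst).le, ← ENNReal.ofReal_mul hs.le]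
  exact (ENNReal.ofReal_lt_ofReal_iff'.2 ⟨mul_neg_log_one_sub_lt_mul hs hst ht,
    mul_pos hs (neg_pos.2 (Real.log_neg (by linarith) (by linarith)))⟩)

theorem ae_eq_of_fixedPoint_le [SigmaFinite μ] (hκ : HyperkernelMeasurable κ)
    (hsymm : HyperkernelSymm κ) (hint : HyperkernelIntegrable μ κ) {f g : S → ℝ}
    (hf : Measurable f) (hg : Measurable g) (hf0 : ∀ x, 0 ≤ f x) (hfg : ∀ x, f x ≤ g x)
    (hg1 : ∀ x, g x ≤ 1) (hfixf : ∀ x, f x = Phi μ κ f x) (hfixg : ∀ x, g x = Phi μ κ g x)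
    (hpos : ∀ᵐ x ∂μ, 0 < f x) : f =ᵐ[μ] g := by
  have hf1 x := (hfg x).trans (hg1 x)
  have hpt : ∀ᵐ x ∂μ, ENNReal.ofReal (g x) * Sop μ κ f x ≤ ENNReal.ofReal (f x) * Sop μ κ g x ∧
      (f x < g x → ENNReal.ofReal (g x) * Sop μ κ f x < ENNReal.ofReal (f x) * Sop μ κ g x) := by
    filter_upwards [hpos, ae_Sop_ne_top hκ hint hf hf1, ae_Sop_ne_top hκ hint hg hg1]
      with x hx hSf hSg
    rw [Sop_eq_ofReal_neg_log (hfixf x) hSf, Sop_eq_ofReal_neg_log (hfixg x) hSg]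
    have hlt := fun h => ofReal_mul_ofReal_neg_log_lt hx h (lt_one_of_Sop_ne_top (hfixg x) hSg)
    exact ⟨(hfg x).eq_or_lt.elim (fun h => by rw [h]) fun h => (hlt h).le, hlt⟩
  have hfin : ∫⁻ x, ENNReal.ofReal (g x) * Sop μ κ f x ∂μ ≠ ⊤ :=
    ne_top_of_le_ne_top (ne_top_of_le_ne_top hint (lintegral_Sop_le hκ hf hf1))
      (lintegral_mono fun x => mul_le_of_le_one_left' (ENNReal.ofReal_le_one.2 (hg1 x)))
  have heq := ae_eq_of_ae_le_of_lintegral_le (hpt.mono fun x hx => hx.1) hfin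
    (hf.ennreal_ofReal.mul (measurable_Sop hκ hg)).aemeasurable
    (lintegral_ofReal_mul_Sop_le hκ hsymm hf hg hf0 hfg hg1)
  filter_upwards [hpt, heq] with x hx hxe
  by_contra hne
  exact (hx.2 ((hfg x).lt_of_ne hne)).ne hxe

theorem eq_zero_of_fixedPoint_of_ae_eq_zero [SigmaFinite μ] {f : S → ℝ}
    (hfix : ∀ x, f x = Phi μ κ f x) (h0 : f =ᵐ[μ] 0) (x : S) : f x = 0 := by
  rw [hfix x, Phi_eq_zero_iff, Sop_congr_ae h0, Sop_zero, Pi.zero_apply]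

end Hyperkernel

/-- Theorem 2.3, `unique`, of the paper.
Let `κ` be an irreducible, integrable hyperkernel and let `f ≤ g` be `[0,1]`-valued
measurable solutions of `f = 1 - e^{-S_κ(f)}`. Then `f = 0` or `f = g`. -/
theorem stmt1 {S : Type*} [MeasurableSpace S] (μ : Measure S) [IsProbabilityMeasure μ]
    (κ : (m : ℕ) → (Fin (m + 2) → S) → ℝ≥0∞)
    (hmeas : HyperkernelMeasurable κ) (hsymm : HyperkernelSymm κ)
    (hint : HyperkernelIntegrable μ κ)
    (hirr : HyperkernelIrreducible μ κ)
    (f g : S → ℝ) (hf : Measurable f) (hg : Measurable g)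
    (hf01 : ∀ x, 0 ≤ f x ∧ f x ≤ 1) (hg01 : ∀ x, 0 ≤ g x ∧ g x ≤ 1)
    (hfg : ∀ x, f x ≤ g x)
    (hfixf : ∀ x, f x = Phi μ κ f x)
    (hfixg : ∀ x, g x = Phi μ κ g x) :
    (∀ x, f x = 0) ∨ f = g := by
  have hf0 x := (hf01 x).1
  set A := {x | 0 < f x}
  have hA : MeasurableSet A := measurableSet_lt measurable_const hf
  have hoff : ∀ x ∉ A, Tlin μ κ f x = 0 := fun x hx =>
    Tlin_eq_zero_of_Sop_eq_zero hmeas hf hf0 (fun x => (hf01 x).2) <| Phi_eq_zero_iff.1 <|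
      (hfixf x).symm.trans (le_antisymm (not_lt.1 hx) (hf0 x))
  rcases hirr A hA (ae_edgeKernel_eq_zero_of_Tlin_eq_zero hmeas hsymm hf hA (fun _ => id) hoff)
    with hA0 | hAc0
  · left
    refine eq_zero_of_fixedPoint_of_ae_eq_zero hfixf ?_
    filter_upwards [measure_eq_zero_iff_ae_notMem.1 hA0] with x hx
    exact le_antisymm (not_lt.1 hx) (hf0 x)
  · right
    have hpos : ∀ᵐ x ∂μ, 0 < f x :=
      (measure_eq_zero_iff_ae_notMem.1 hAc0).mono fun x hx => not_not.1 hx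
    have hfg_ae := ae_eq_of_fixedPoint_le hmeas hsymm hint hf hg hf0 hfg (fun x => (hg01 x).2)
      hfixf hfixg hpos
    funext x
    rw [hfixf x, hfixg x, Phi, Phi, Sop_congr_ae hfg_ae]
end

section
/- Let κ be an integrable hyperkernel on a probability space (S, μ), and let f, g : S → [0,1] be measurable functions with f(x) ≤ g(x) for every x ∈ S. Then ∫_S f·S_κ(g) dμ ≤ ∫_S g·S_κ(f) dμ (as integrals with values in [0,∞]). -/
open MeasureTheory ENNReal Filter Topology

/-! Writing `1 - ∏ i, (1 - g (x i)) = ∑ i, g (x i) * ∏ j < i, (1 - g (x j))` (the first success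
among independent trials with success probabilities `g (x i)` is at `i`), the `i`-th term of
`∫ f · S_κ(g)` only grows when the factors `1 - g` are replaced by the larger `1 - f`. The resulting
integrand `κ(x) f(x₀) g(xᵢ) ∏ j < i, (1 - f (x j))` becomes the `i`-th term of `∫ g · S_κ(f)` once
`x₀` and `xᵢ` are exchanged, which preserves both `κ` and the product measure. -/

open Finset

theorem ENNReal.ofReal_one_sub_prod_one_sub {ι : Type*} [Fintype ι] [LinearOrder ι] (p : ι → ℝ)
    (hp0 : ∀ i, 0 ≤ p i) (hp1 : ∀ i, p i ≤ 1) :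
    ENNReal.ofReal (1 - ∏ i, (1 - p i)) =
      ∑ i, ENNReal.ofReal (p i) * ∏ j with j < i, ENNReal.ofReal (1 - p j) := by
  have hq0 : ∀ i, 0 ≤ 1 - p i := fun i => sub_nonneg.2 (hp1 i)
  rw [prod_one_sub_ordered, _root_.sub_sub_cancel, ENNReal.ofReal_sum_of_nonneg
    fun i _ => mul_nonneg (hp0 i) (prod_nonneg fun j _ => hq0 j)]
  refine sum_congr rfl fun i _ => ?_
  rw [ENNReal.ofReal_mul (hp0 i), ENNReal.ofReal_prod_of_nonneg fun j _ => hq0 j]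

section

variable {S : Type*} [MeasurableSpace S] {μ : Measure S}

theorem lintegral_pi_comp_perm_s3 {ι : Type*} [Fintype ι] [SigmaFinite μ] (σ : Equiv.Perm ι)
    (F : (ι → S) → ℝ≥0∞) :
    ∫⁻ v, F (v ∘ σ) ∂Measure.pi (fun _ => μ) = ∫⁻ v, F v ∂Measure.pi (fun _ => μ) :=
  (measurePreserving_piCongrLeft (fun _ => μ) σ).symm.lintegral_comp_emb
    (MeasurableEquiv.measurableEmbedding _) F

theorem lintegral_lintegral_pi_cons [SigmaFinite μ] {n : ℕ} {F : (Fin (n + 1) → S) → ℝ≥0∞}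
    (hF : Measurable F) :
    ∫⁻ x, ∫⁻ y, F (Fin.cons x y) ∂Measure.pi (fun _ : Fin n => μ) ∂μ =
      ∫⁻ v, F v ∂Measure.pi (fun _ => μ) := by
  let e := (MeasurableEquiv.piFinSuccAbove (fun _ : Fin (n + 1) => S) 0).symm
  rw [← (measurePreserving_piFinSuccAbove (fun _ => μ) 0).symm.lintegral_comp hF,
    lintegral_prod (μ := μ) (ν := Measure.pi fun _ : Fin n => μ) (fun a => F (e a))
    (hF.comp e.measurable).aemeasurable]
  simp [e, MeasurableEquiv.piFinSuccAbove_symm_apply, Fin.insertNthEquiv]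

theorem measurable_lintegral_pi_cons [SigmaFinite μ] {n : ℕ} {F : (Fin (n + 1) → S) → ℝ≥0∞}
    (hF : Measurable F) :
    Measurable fun x => ∫⁻ y, F (Fin.cons x y) ∂Measure.pi (fun _ : Fin n => μ) := by
  simpa [MeasurableEquiv.piFinSuccAbove_symm_apply, Fin.insertNthEquiv] using
    (hF.comp (MeasurableEquiv.piFinSuccAbove (fun _ : Fin (n + 1) => S) 0).symm.measurable
      ).lintegral_prod_right' (ν := Measure.pi fun _ : Fin n => μ)

variable {n : ℕ} {K : (Fin (n + 1) → S) → ℝ≥0∞} {f g : S → ℝ}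

theorem lintegral_ofReal_mul_one_sub_prod_eq_sum (hK : Measurable K) {φ ψ : S → ℝ}
    (hφ : Measurable φ) (hψ : Measurable ψ) (hψ0 : ∀ x, 0 ≤ ψ x) (hψ1 : ∀ x, ψ x ≤ 1) :
    ∫⁻ v, ENNReal.ofReal (φ (v 0)) * K v * ENNReal.ofReal (1 - ∏ i : Fin n, (1 - ψ (v i.succ)))
        ∂Measure.pi (fun _ => μ) =
      ∑ i : Fin n, ∫⁻ v, ENNReal.ofReal (φ (v 0)) * K v *
        (ENNReal.ofReal (ψ (v i.succ)) * ∏ j with j < i, ENNReal.ofReal (1 - ψ (v j.succ)))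
        ∂Measure.pi (fun _ => μ) := by
  simp_rw [ofReal_one_sub_prod_one_sub _ (fun _ => hψ0 _) (fun _ => hψ1 _), mul_sum]
  exact lintegral_finsetSum _ fun i _ => by fun_prop

theorem lintegral_firstSuccess_le [SigmaFinite μ]
    (hKsymm : ∀ (σ : Equiv.Perm (Fin (n + 1))) v, K (v ∘ σ) = K v)
    (hfg : ∀ x, f x ≤ g x) (i : Fin n) :
    ∫⁻ v, ENNReal.ofReal (f (v 0)) * K v *
        (ENNReal.ofReal (g (v i.succ)) * ∏ j with j < i, ENNReal.ofReal (1 - g (v j.succ)))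
        ∂Measure.pi (fun _ => μ) ≤
      ∫⁻ v, ENNReal.ofReal (g (v 0)) * K v *
        (ENNReal.ofReal (f (v i.succ)) * ∏ j with j < i, ENNReal.ofReal (1 - f (v j.succ)))
        ∂Measure.pi (fun _ => μ) := by
  set F : (Fin (n + 1) → S) → ℝ≥0∞ := fun v => ENNReal.ofReal (g (v 0)) * K v *
    (ENNReal.ofReal (f (v i.succ)) * ∏ j with j < i, ENNReal.ofReal (1 - f (v j.succ)))
  set σ := Equiv.swap 0 i.succ
  have hσ_ne : ∀ j < i, σ j.succ = j.succ := fun j hj =>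
    Equiv.swap_apply_of_ne_of_ne (Fin.succ_ne_zero j) (Fin.succ_injective _ |>.ne hj.ne)
  calc _ ≤ ∫⁻ v, ENNReal.ofReal (f (v 0)) * K v *
        (ENNReal.ofReal (g (v i.succ)) * ∏ j with j < i, ENNReal.ofReal (1 - f (v j.succ)))
        ∂Measure.pi (fun _ => μ) := by
        gcongr with v j
        exact hfg _
    _ = ∫⁻ v, F (v ∘ σ) ∂Measure.pi (fun _ => μ) := by
        refine lintegral_congr fun v => ?_
        have hprod : ∏ j with j < i, ENNReal.ofReal (1 - f ((v ∘ σ) j.succ)) =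
            ∏ j with j < i, ENNReal.ofReal (1 - f (v j.succ)) :=
          prod_congr rfl fun j hj => by rw [Function.comp_apply, hσ_ne j (mem_filter.1 hj).2]
        simp only [F, hprod, hKsymm]
        simp only [Function.comp_apply, σ, Equiv.swap_apply_left, Equiv.swap_apply_right]
        ring
    _ = ∫⁻ v, F v ∂Measure.pi (fun _ => μ) := lintegral_pi_comp_perm_s3 σ F

theorem lintegral_ofReal_mul_one_sub_prod_le [SigmaFinite μ] (hK : Measurable K)
    (hKsymm : ∀ (σ : Equiv.Perm (Fin (n + 1))) v, K (v ∘ σ) = K v)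
    (hf : Measurable f) (hg : Measurable g)
    (hf0 : ∀ x, 0 ≤ f x) (hfg : ∀ x, f x ≤ g x) (hg1 : ∀ x, g x ≤ 1) :
    ∫⁻ v, ENNReal.ofReal (f (v 0)) * K v * ENNReal.ofReal (1 - ∏ i : Fin n, (1 - g (v i.succ)))
        ∂Measure.pi (fun _ => μ) ≤
      ∫⁻ v, ENNReal.ofReal (g (v 0)) * K v * ENNReal.ofReal (1 - ∏ i : Fin n, (1 - f (v i.succ)))
        ∂Measure.pi (fun _ => μ) := by
  rw [lintegral_ofReal_mul_one_sub_prod_eq_sum hK hf hg (fun x => (hf0 x).trans (hfg x)) hg1,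
    lintegral_ofReal_mul_one_sub_prod_eq_sum hK hg hf hf0 (fun x => (hfg x).trans (hg1 x))]
  exact sum_le_sum fun i _ => lintegral_firstSuccess_le hKsymm hfg i

end

theorem lintegral_ofReal_mul_Sop_s3 {S : Type*} [MeasurableSpace S] (μ : Measure S) [SigmaFinite μ]
    {κ : (m : ℕ) → (Fin (m + 2) → S) → ℝ≥0∞} (hκ : HyperkernelMeasurable κ) {φ ψ : S → ℝ}
    (hφ : Measurable φ) (hψ : Measurable ψ) :
    ∫⁻ x, ENNReal.ofReal (φ x) * Sop μ κ ψ x ∂μ =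
      ∑' m : ℕ, ((m : ℝ≥0∞) + 2) * ∫⁻ v, ENNReal.ofReal (φ (v 0)) * κ m v *
        ENNReal.ofReal (1 - ∏ i : Fin (m + 1), (1 - ψ (v i.succ))) ∂Measure.pi (fun _ => μ) := by
  set F : (m : ℕ) → (Fin (m + 2) → S) → ℝ≥0∞ := fun m v => ENNReal.ofReal (φ (v 0)) * κ m v *
    ENNReal.ofReal (1 - ∏ i : Fin (m + 1), (1 - ψ (v i.succ)))
  have hF : ∀ m, Measurable (F m) := fun m => by have := hκ m; fun_prop
  have hpointwise : ∀ x, ENNReal.ofReal (φ x) * Sop μ κ ψ x =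
      ∑' m : ℕ, ((m : ℝ≥0∞) + 2) * ∫⁻ y, F m (Fin.cons x y) ∂Measure.pi (fun _ => μ) := by
    intro x
    rw [Sop, ← ENNReal.tsum_mul_left]
    refine tsum_congr fun m => ?_
    rw [mul_left_comm, ← lintegral_const_mul' _ _ ofReal_ne_top]
    simp only [F, Fin.cons_zero, Fin.cons_succ, mul_assoc]
  rw [lintegral_congr hpointwise,
    lintegral_tsum fun m => ((measurable_lintegral_pi_cons (hF m)).const_mul _).aemeasurable]
  refine tsum_congr fun m => ?_
  rw [lintegral_const_mul _ (measurable_lintegral_pi_cons (hF m)),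
    lintegral_lintegral_pi_cons (hF m)]

theorem stmt3_general {S : Type*} [MeasurableSpace S] (μ : Measure S) [IsProbabilityMeasure μ]
    (κ : (m : ℕ) → (Fin (m + 2) → S) → ℝ≥0∞)
    (hmeas : HyperkernelMeasurable κ) (hsymm : HyperkernelSymm κ)
    (f g : S → ℝ) (hf : Measurable f) (hg : Measurable g)
    (hf0 : ∀ x, 0 ≤ f x) (hfg : ∀ x, f x ≤ g x) (hg1 : ∀ x, g x ≤ 1) :
    ∫⁻ x, ENNReal.ofReal (f x) * Sop μ κ g x ∂μ ≤
      ∫⁻ x, ENNReal.ofReal (g x) * Sop μ κ f x ∂μ := by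
  rw [lintegral_ofReal_mul_Sop_s3 μ hmeas hf hg, lintegral_ofReal_mul_Sop_s3 μ hmeas hg hf]
  exact ENNReal.tsum_le_tsum fun m => mul_le_mul_right
    (lintegral_ofReal_mul_one_sub_prod_le (hmeas m) (hsymm m) hf hg hf0 hfg hg1) _

/-- Lemma 2.2, `l_fSg`, of the paper.
For an integrable hyperkernel `κ` and measurable `0 ≤ f ≤ g ≤ 1`,
`∫ f·S_κ(g) dμ ≤ ∫ g·S_κ(f) dμ`. -/
theorem stmt3 {S : Type*} [MeasurableSpace S] (μ : Measure S) [IsProbabilityMeasure μ]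
    (κ : (m : ℕ) → (Fin (m + 2) → S) → ℝ≥0∞)
    (hmeas : HyperkernelMeasurable κ) (hsymm : HyperkernelSymm κ)
    (hint : HyperkernelIntegrable μ κ)
    (f g : S → ℝ) (hf : Measurable f) (hg : Measurable g)
    (hf0 : ∀ x, 0 ≤ f x) (hfg : ∀ x, f x ≤ g x) (hg1 : ∀ x, g x ≤ 1) :
    ∫⁻ x, ENNReal.ofReal (f x) * Sop μ κ g x ∂μ ≤
      ∫⁻ x, ENNReal.ofReal (g x) * Sop μ κ f x ∂μ :=
  stmt3_general μ κ hmeas hsymm f g hf hg hf0 hfg hg1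
end

section
/- Let r ≥ 2 and let y₁, …, y_r and z₁, …, z_r be real numbers in [0,1] with y_i ≤ z_i for each i. Then ∑_{π ∈ Sym(r)} y_{π(1)}·(1 − ∏_{i=2}^{r} (1 − z_{π(i)})) ≤ ∑_{π ∈ Sym(r)} z_{π(1)}·(1 − ∏_{i=2}^{r} (1 − y_{π(i)})), where both sums range over all permutations π of {1, …, r}. -/
/-!
Reindexing by `π ↦ π * swap i k` shows that `∑_π f (π i)` does not depend on `i`, so each side
is `(r - 1)!` times a sum over the first element `a = π 1`. Writing `Q_w(a) = ∏_{b ≠ a} (1 - w_b)`,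
it remains to show `∑_a y_a (Q_y(a) - Q_z(a)) ≤ ∑_a (z_a - y_a) (1 - Q_y(a))`. For `0 ≤ v ≤ u`,
`∏ u - ∏ v` lies between `∑_c (u_c - v_c) ∏_{b ≠ c} v_b` and `∑_c (u_c - v_c) ∏_{b ≠ c} u_b`.
The upper bound applied to `Q_y(a) - Q_z(a)`, followed by swapping the two summations, bounds the
left side by `∑_c (z_c - y_c) ∑_{a ≠ c} y_a ∏_{b ≠ a, c} (1 - y_b)`, and the lower bound (with
`u = 1`) bounds the inner sum by `1 - Q_y(c)`.
-/

open Finset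

namespace Finset

variable {ι R : Type*} [DecidableEq ι]

theorem sum_mul_prod_erase_insert [CommSemiring R] {s : Finset ι} {a : ι} (ha : a ∉ s)
    (f w : ι → R) :
    ∑ c ∈ insert a s, f c * ∏ b ∈ (insert a s).erase c, w b =
      f a * ∏ b ∈ s, w b + w a * ∑ c ∈ s, f c * ∏ b ∈ s.erase c, w b := by
  rw [sum_insert ha, erase_insert ha, mul_sum]
  congr 1
  refine sum_congr rfl fun c hc => ?_
  rw [erase_insert_of_ne (ne_of_mem_of_not_mem hc ha).symm,
    prod_insert fun h => ha (mem_of_mem_erase h)]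
  ring

variable [CommRing R] [PartialOrder R] [IsOrderedRing R]

theorem prod_sub_prod_le_sum_mul_prod_erase (s : Finset ι) {u v : ι → R}
    (hv : ∀ i ∈ s, 0 ≤ v i) (hvu : ∀ i ∈ s, v i ≤ u i) :
    ∏ i ∈ s, u i - ∏ i ∈ s, v i ≤ ∑ c ∈ s, (u c - v c) * ∏ i ∈ s.erase c, u i := by
  induction s using Finset.induction_on with
  | empty => simp
  | insert a s ha ih =>
    simp only [mem_insert, forall_eq_or_imp] at hv hvu
    have hUV : ∏ i ∈ s, v i ≤ ∏ i ∈ s, u i := prod_le_prod hv.2 hvu.2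
    have ih := ih hv.2 hvu.2
    rw [prod_insert ha, prod_insert ha, sum_mul_prod_erase_insert ha]
    calc u a * ∏ i ∈ s, u i - v a * ∏ i ∈ s, v i
        = (u a - v a) * ∏ i ∈ s, u i + v a * (∏ i ∈ s, u i - ∏ i ∈ s, v i) := by ring
      _ ≤ (u a - v a) * ∏ i ∈ s, u i + u a * ∑ c ∈ s, (u c - v c) * ∏ i ∈ s.erase c, u i := by
        exact add_le_add le_rfl (mul_le_mul hvu.1 ih (sub_nonneg.2 hUV) (hv.1.trans hvu.1))

theorem sum_mul_prod_erase_le_prod_sub_prod (s : Finset ι) {u v : ι → R}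
    (hv : ∀ i ∈ s, 0 ≤ v i) (hvu : ∀ i ∈ s, v i ≤ u i) :
    ∑ c ∈ s, (u c - v c) * ∏ i ∈ s.erase c, v i ≤ ∏ i ∈ s, u i - ∏ i ∈ s, v i := by
  induction s using Finset.induction_on with
  | empty => simp
  | insert a s ha ih =>
    simp only [mem_insert, forall_eq_or_imp] at hv hvu
    have hUV : ∏ i ∈ s, v i ≤ ∏ i ∈ s, u i := prod_le_prod hv.2 hvu.2
    have ih := ih hv.2 hvu.2
    rw [prod_insert ha, prod_insert ha, sum_mul_prod_erase_insert ha]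
    calc
      _ ≤ (u a - v a) * ∏ i ∈ s, v i + u a * (∏ i ∈ s, u i - ∏ i ∈ s, v i) :=
        add_le_add le_rfl <| (mul_le_mul_of_nonneg_left ih hv.1).trans
          (mul_le_mul_of_nonneg_right hvu.1 (sub_nonneg.2 hUV))
      _ = u a * ∏ i ∈ s, u i - v a * ∏ i ∈ s, v i := by ring

theorem sum_mul_one_sub_prod_erase_le (s : Finset ι) {y z : ι → R}
    (hy : ∀ i ∈ s, 0 ≤ y i) (hyz : ∀ i ∈ s, y i ≤ z i) (hz : ∀ i ∈ s, z i ≤ 1) :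
    ∑ a ∈ s, y a * (1 - ∏ b ∈ s.erase a, (1 - z b)) ≤
      ∑ a ∈ s, z a * (1 - ∏ b ∈ s.erase a, (1 - y b)) := by
  have cross : ∑ a ∈ s, y a * (∏ b ∈ s.erase a, (1 - y b) - ∏ b ∈ s.erase a, (1 - z b)) ≤
      ∑ c ∈ s, (z c - y c) * (1 - ∏ b ∈ s.erase c, (1 - y b)) :=
    calc
      _ ≤ ∑ a ∈ s, ∑ c ∈ s.erase a,
            (z c - y c) * (y a * ∏ b ∈ (s.erase a).erase c, (1 - y b)) := by
        refine sum_le_sum fun a ha => ?_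
        have h := prod_sub_prod_le_sum_mul_prod_erase (s.erase a) (u := fun b => 1 - y b)
          (v := fun b => 1 - z b) (fun i hi => sub_nonneg.2 (hz i (mem_of_mem_erase hi)))
          (fun i hi => sub_le_sub_left (hyz i (mem_of_mem_erase hi)) 1)
        simp only [sub_sub_sub_cancel_left] at h
        refine (mul_le_mul_of_nonneg_left h (hy a ha)).trans_eq ?_
        rw [mul_sum]
        exact sum_congr rfl fun c _ => by ring
      _ = ∑ c ∈ s, ∑ a ∈ s.erase c,
            (z c - y c) * (y a * ∏ b ∈ (s.erase c).erase a, (1 - y b)) := by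
        rw [sum_comm' (t' := s) (s' := s.erase) fun a c => by simp only [mem_erase]; grind]
        exact sum_congr rfl fun c _ => sum_congr rfl fun a _ => by rw [erase_right_comm]
      _ ≤ _ := by
        refine sum_le_sum fun c hc => ?_
        rw [← mul_sum]
        refine mul_le_mul_of_nonneg_left ?_ (sub_nonneg.2 (hyz c hc))
        simpa using sum_mul_prod_erase_le_prod_sub_prod (s.erase c) (u := 1)
          (v := fun b => 1 - y b) (fun i hi => sub_nonneg.2 ((hyz i (mem_of_mem_erase hi)).trans
            (hz i (mem_of_mem_erase hi)))) (fun i hi => sub_le_self 1 (hy i (mem_of_mem_erase hi)))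
  rw [← sub_nonneg]
  calc 0 ≤ ∑ c ∈ s, (z c - y c) * (1 - ∏ b ∈ s.erase c, (1 - y b)) -
        ∑ a ∈ s, y a * (∏ b ∈ s.erase a, (1 - y b) - ∏ b ∈ s.erase a, (1 - z b)) :=
      sub_nonneg.2 cross
    _ = _ := by
      rw [← sum_sub_distrib, ← sum_sub_distrib]
      exact sum_congr rfl fun a _ => by ring

end Finset

namespace Equiv.Perm

variable {α : Type*} [Fintype α] [DecidableEq α]

theorem card_nsmul_sum_apply {M : Type*} [AddCommMonoid M] (f : α → M) (i : α) :
    Fintype.card α • ∑ σ : Perm α, f (σ i) = (Fintype.card α).factorial • ∑ a, f a := by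
  calc Fintype.card α • ∑ σ : Perm α, f (σ i) = ∑ k : α, ∑ σ : Perm α, f (σ k) := by
        rw [← card_univ, ← sum_const]
        refine sum_congr rfl fun k _ => ?_
        simpa [mul_apply] using (Equiv.sum_comp (Equiv.mulRight (swap i k)) fun σ => f (σ i)).symm
    _ = ∑ σ : Perm α, ∑ a, f a := by
        rw [sum_comm]
        exact sum_congr rfl fun σ _ => Equiv.sum_comp σ f
    _ = (Fintype.card α).factorial • ∑ a, f a := by
        rw [sum_const, card_univ, Fintype.card_perm]

theorem sum_apply_le_sum_apply {M : Type*} [AddCommMonoid M] [LinearOrder M]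
    [IsOrderedCancelAddMonoid M] {f g : α → M} (h : ∑ a, f a ≤ ∑ a, g a) (i : α) :
    ∑ σ : Perm α, f (σ i) ≤ ∑ σ : Perm α, g (σ i) := by
  rw [← nsmul_le_nsmul_iff_right (Fintype.card_pos_iff.2 ⟨i⟩).ne', card_nsmul_sum_apply,
    card_nsmul_sum_apply]
  exact nsmul_le_nsmul_right h _

theorem prod_erase_comp {M : Type*} [CommMonoid M] (σ : Perm α) (f : α → M) (i : α) :
    ∏ j ∈ univ.erase i, f (σ j) = ∏ j ∈ univ.erase (σ i), f j :=
  prod_equiv σ (by simp) (by simp)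

end Equiv.Perm

/-- the key pointwise inequality from the proof of Lemma 2.2 of the paper.
For `r ≥ 2` and reals `0 ≤ y_i ≤ z_i ≤ 1`,
`∑_{π ∈ Sym(r)} y_{π(1)}·(1 − ∏_{i=2}^r (1 − z_{π(i)}))
  ≤ ∑_{π ∈ Sym(r)} z_{π(1)}·(1 − ∏_{i=2}^r (1 − y_{π(i)}))`. -/
theorem stmt4 (r : ℕ) (hr : 2 ≤ r) (y z : Fin r → ℝ)
    (hy0 : ∀ i, 0 ≤ y i) (hyz : ∀ i, y i ≤ z i) (hz1 : ∀ i, z i ≤ 1) :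
    ∑ π : Equiv.Perm (Fin r),
        y (π ⟨0, by omega⟩) *
          (1 - ∏ i ∈ Finset.univ.erase (⟨0, by omega⟩ : Fin r), (1 - z (π i))) ≤
      ∑ π : Equiv.Perm (Fin r),
        z (π ⟨0, by omega⟩) *
          (1 - ∏ i ∈ Finset.univ.erase (⟨0, by omega⟩ : Fin r), (1 - y (π i))) := by
  have key := Equiv.Perm.sum_apply_le_sum_apply
    (sum_mul_one_sub_prod_erase_le univ (fun i _ => hy0 i) (fun i _ => hyz i) fun i _ => hz1 i)
    (⟨0, by omega⟩ : Fin r)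
  simpa only [← Equiv.Perm.prod_erase_comp] using key
end

section
/- Let λ, λ' : {1, 2, 3, …} → [0,∞) satisfy ∑_{j≥1} λ_j < ∞ and ∑_{j≥1} λ'_j < ∞. Let (Ω, P) be a probability space carrying a family (X_j)_{j≥1} of independent random variables with X_j Poisson-distributed with mean λ_j, and a family (X'_j)_{j≥1} of independent random variables with X'_j Poisson-distributed with mean λ'_j (the two families need not be independent of each other). Then W = ∑_{j≥1} j·X_j and W' = ∑_{j≥1} j·X'_j are almost surely finite, and for every set A ⊆ ℕ, |P(W ∈ A) − P(W' ∈ A)| ≤ ∑_{j≥1} |λ_j − λ'_j|. Equivalently, the total variation distance between the compound Poisson distributions CPo(λ) and CPo(λ') is at most ∑_{j≥1} |λ_j − λ'_j|. -/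
/-!
Total variation closeness is preserved under convolution with a probability measure, because
`(μ ∗ κ) s = ∫ μ (s - y) dκ(y)`; with commutativity it is subadditive under convolution.
For `a ≤ b` we have `Po(b) = Po(a) ∗ Po(b - a)` and `Po(a) = Po(a) ∗ δ₀`, so the Poisson case
reduces to comparing `δ₀` with `Po(c)`, which differ by `Po(c){0}ᶜ = 1 - e^{-c} ≤ c`. Independence
makes the law of each partial sum `∑_{j<n} (j+1) X_j` a convolution, hence within
`∑_{j<n} |λ_j - λ'_j|` of its primed counterpart. Finally the partial sum differs from `W` only
if some `X_j` with `j ≥ n` is nonzero, an event of probability at most `∑_{j≥n} λ_j → 0`; this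
gives almost sure finiteness and, letting `n → ∞`, the bound.
-/

open MeasureTheory ENNReal Filter ProbabilityTheory

/-- The compound Poisson sum `W = ∑_{j≥1} j·X_j`, valued in `[0,∞]`; here the family is
indexed by `j : ℕ` with `X j` playing the role of `X_{j+1}`. -/
noncomputable def cpSum {Ω : Type*} (X : ℕ → Ω → ℕ) (ω : Ω) : ℝ≥0∞ :=
  ∑' j : ℕ, ((j : ℝ≥0∞) + 1) * (X j ω : ℝ≥0∞)

/-- `X` is a family of independent Poisson random variables on `(Ω, P)`, with `X j`
Poisson-distributed with mean `lam j` (representing `λ_{j+1}`). -/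
def IsIndepPoissonFamily {Ω : Type*} [MeasurableSpace Ω] (P : Measure Ω)
    (lam : ℕ → ℝ) (X : ℕ → Ω → ℕ) : Prop :=
  (∀ j, Measurable (X j)) ∧
  iIndepFun X P ∧
  ∀ j k, P {ω | X j ω = k} =
    ENNReal.ofReal (Real.exp (-(lam j)) * lam j ^ k / (Nat.factorial k))

open scoped NNReal Topology
open Finset

/-- For probability measures, `d_TV(μ, ν) ≤ δ`. -/
def TVClose {α : Type*} [MeasurableSpace α] (μ ν : Measure α) (δ : ℝ≥0∞) : Prop :=
  ∀ s, MeasurableSet s → μ s ≤ ν s + δ ∧ ν s ≤ μ s + δ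

namespace TVClose

variable {α : Type*} [MeasurableSpace α] {μ ν ρ : Measure α} {δ ε : ℝ≥0∞}

lemma refl (μ : Measure α) : TVClose μ μ 0 := fun s _ => by simp

lemma symm (h : TVClose μ ν δ) : TVClose ν μ δ := fun s hs => (h s hs).symm

lemma mono (h : TVClose μ ν δ) (hδε : δ ≤ ε) : TVClose μ ν ε := fun s hs =>
  ⟨(h s hs).1.trans (by gcongr), (h s hs).2.trans (by gcongr)⟩

lemma trans (h₁ : TVClose μ ν δ) (h₂ : TVClose ν ρ ε) : TVClose μ ρ (δ + ε) := fun s hs =>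
  ⟨calc μ s ≤ ν s + δ := (h₁ s hs).1
      _ ≤ ρ s + ε + δ := by gcongr; exact (h₂ s hs).1
      _ = ρ s + (δ + ε) := by ring,
   calc ρ s ≤ ν s + ε := (h₂ s hs).2
      _ ≤ μ s + δ + ε := by gcongr; exact (h₁ s hs).2
      _ = μ s + (δ + ε) := by ring⟩

lemma map {β : Type*} [MeasurableSpace β] (h : TVClose μ ν δ) {f : α → β} (hf : Measurable f) :
    TVClose (μ.map f) (ν.map f) δ := fun s hs => by
  simpa only [Measure.map_apply hf hs] using h _ (hf hs)

end TVClose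

section Convolution

variable {M : Type*} [MeasurableSpace M]

lemma Measure.conv_apply_eq_lintegral [AddMonoid M] [MeasurableAdd₂ M] (μ κ : Measure M)
    [SFinite μ] [SFinite κ] {s : Set M} (hs : MeasurableSet s) :
    (μ ∗ κ) s = ∫⁻ y, μ ((· + y) ⁻¹' s) ∂κ := by
  rw [Measure.conv, Measure.map_apply measurable_add hs,
    Measure.prod_apply_symm (measurable_add hs)]
  rfl

lemma Measure.conv_apply_le_conv_apply_add [AddMonoid M] [MeasurableAdd₂ M]
    {μ ν κ : Measure M} [SFinite μ] [SFinite ν] [IsProbabilityMeasure κ] {δ : ℝ≥0∞}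
    (h : ∀ s, MeasurableSet s → μ s ≤ ν s + δ) {s : Set M} (hs : MeasurableSet s) :
    (μ ∗ κ) s ≤ (ν ∗ κ) s + δ := by
  rw [Measure.conv_apply_eq_lintegral μ κ hs, Measure.conv_apply_eq_lintegral ν κ hs]
  calc ∫⁻ y, μ ((· + y) ⁻¹' s) ∂κ ≤ ∫⁻ y, ν ((· + y) ⁻¹' s) + δ ∂κ :=
        lintegral_mono fun y => h _ (measurable_add_const y hs)
    _ = ∫⁻ y, ν ((· + y) ⁻¹' s) ∂κ + δ := by
        rw [lintegral_add_right _ measurable_const, lintegral_const, measure_univ, mul_one]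

lemma TVClose.conv_right [AddMonoid M] [MeasurableAdd₂ M] {μ ν : Measure M} [SFinite μ]
    [SFinite ν] {δ : ℝ≥0∞} (h : TVClose μ ν δ) (κ : Measure M) [IsProbabilityMeasure κ] :
    TVClose (μ ∗ κ) (ν ∗ κ) δ := fun _ hs =>
  ⟨Measure.conv_apply_le_conv_apply_add (fun t ht => (h t ht).1) hs,
    Measure.conv_apply_le_conv_apply_add (fun t ht => (h t ht).2) hs⟩

lemma TVClose.conv [AddCommMonoid M] [MeasurableAdd₂ M] {μ ν κ κ' : Measure M}
    [IsProbabilityMeasure μ] [IsProbabilityMeasure ν] [IsProbabilityMeasure κ]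
    [IsProbabilityMeasure κ'] {δ ε : ℝ≥0∞} (h : TVClose μ ν δ) (h' : TVClose κ κ' ε) :
    TVClose (μ ∗ κ) (ν ∗ κ') (δ + ε) := by
  refine (h.conv_right κ).trans ?_
  rw [Measure.conv_comm ν κ, Measure.conv_comm ν κ']
  exact h'.conv_right ν

end Convolution

lemma tvClose_dirac {α : Type*} [MeasurableSpace α] [MeasurableSingletonClass α] (x : α)
    (μ : Measure α) [IsProbabilityMeasure μ] : TVClose (Measure.dirac x) μ (μ {x}ᶜ) := by
  intro s hs
  by_cases hx : x ∈ s
  · rw [Measure.dirac_apply_of_mem hx]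
    refine ⟨?_, prob_le_one.trans le_self_add⟩
    calc 1 = μ {x} + μ {x}ᶜ := by
          rw [measure_add_measure_compl (measurableSet_singleton x), measure_univ]
      _ ≤ μ s + μ {x}ᶜ := by gcongr; exact Set.singleton_subset_iff.2 hx
  · rw [Measure.dirac_apply' _ hs, Set.indicator_of_notMem hx, zero_add]
    exact ⟨zero_le, measure_mono fun y hy hyx => hx (hyx ▸ hy)⟩

lemma poissonMeasure_compl_zero_le (r : ℝ≥0) : Po(r) {0}ᶜ ≤ r := by
  rw [prob_compl_eq_one_sub (measurableSet_singleton 0), poissonMeasure_singleton,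
    tsub_le_iff_right]
  simp only [pow_zero, Nat.factorial_zero, Nat.cast_one, mul_one, div_one]
  rw [← ENNReal.ofReal_coe_nnreal, ← ENNReal.ofReal_add r.coe_nonneg (Real.exp_nonneg _),
    ENNReal.one_le_ofReal]
  linarith [Real.add_one_le_exp (-(r : ℝ))]

lemma tvClose_poissonMeasure (a b : ℝ≥0) : TVClose Po(a) Po(b) (edist a b) := by
  wlog hab : a ≤ b generalizing a b
  · simpa only [edist_comm] using (this b a (le_of_not_ge hab)).symm
  obtain ⟨c, rfl⟩ := exists_add_of_le hab
  have hdist : edist a (a + c) = c := by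
    rw [edist_dist, NNReal.dist_eq, NNReal.coe_add, sub_add_cancel_left, abs_neg,
      abs_of_nonneg c.coe_nonneg, ENNReal.ofReal_coe_nnreal]
  rw [hdist, ← poissonMeasure_conv_poissonMeasure]
  conv_lhs => rw [← Measure.conv_dirac_zero Po(a)]
  simpa using ((TVClose.refl Po(a)).conv (tvClose_dirac 0 Po(c))).mono
    (by simpa using poissonMeasure_compl_zero_le c)

lemma tvClose_map_sum_range {M : Type*} [AddCommMonoid M] [MeasurableSpace M] [MeasurableAdd₂ M]
    {Ω Ω' : Type*} [MeasurableSpace Ω] [MeasurableSpace Ω'] {P : Measure Ω} {P' : Measure Ω'}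
    [IsProbabilityMeasure P] [IsProbabilityMeasure P'] {Y : ℕ → Ω → M} {Y' : ℕ → Ω' → M}
    (hY : ∀ j, Measurable (Y j)) (hY' : ∀ j, Measurable (Y' j))
    (hind : iIndepFun Y P) (hind' : iIndepFun Y' P') {δ : ℕ → ℝ≥0∞}
    (hδ : ∀ j, TVClose (P.map (Y j)) (P'.map (Y' j)) (δ j)) (n : ℕ) :
    TVClose (P.map (∑ j ∈ range n, Y j)) (P'.map (∑ j ∈ range n, Y' j)) (∑ j ∈ range n, δ j) := by
  induction n with
  | zero =>
    simpa [Pi.zero_def, Measure.map_const] using TVClose.refl (Measure.dirac (0 : M))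
  | succ n ih =>
    have hS : Measurable (∑ j ∈ range n, Y j) := by
      rw [Finset.sum_fn]; exact Finset.measurable_sum _ fun j _ => hY j
    have hS' : Measurable (∑ j ∈ range n, Y' j) := by
      rw [Finset.sum_fn]; exact Finset.measurable_sum _ fun j _ => hY' j
    have := Measure.isProbabilityMeasure_map (μ := P) hS.aemeasurable
    have := Measure.isProbabilityMeasure_map (μ := P') hS'.aemeasurable
    have := Measure.isProbabilityMeasure_map (μ := P) (hY n).aemeasurable
    have := Measure.isProbabilityMeasure_map (μ := P') (hY' n).aemeasurable
    rw [sum_range_succ, sum_range_succ, sum_range_succ,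
      (hind.indepFun_sum_range_succ hY n).map_add_eq_map_conv_map hS (hY n),
      (hind'.indepFun_sum_range_succ hY' n).map_add_eq_map_conv_map hS' (hY' n)]
    exact ih.conv (hδ n)

lemma measure_le_measure_add_measure_ne {Ω β : Type*} [MeasurableSpace Ω] (P : Measure Ω)
    (f g : Ω → β) (s : Set β) :
    P {ω | f ω ∈ s} ≤ P {ω | g ω ∈ s} + P {ω | f ω ≠ g ω} :=
  (measure_mono fun ω (hω : f ω ∈ s) =>
    (em (f ω = g ω)).imp (fun h : f ω = g ω => show g ω ∈ s from h ▸ hω) id).trans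
    (measure_union_le _ _)

lemma ENNReal.tendsto_tsum_ofReal_nat_add {f : ℕ → ℝ} (hf0 : ∀ j, 0 ≤ f j) (hf : Summable f) :
    Tendsto (fun n => ∑' i, ENNReal.ofReal (f (i + n))) atTop (𝓝 0) :=
  ENNReal.tendsto_sum_nat_add _ <| by
    rw [← ENNReal.ofReal_tsum_of_nonneg hf0 hf]; exact ofReal_ne_top

lemma ENNReal.abs_toReal_sub_le {a b : ℝ≥0∞} {c : ℝ} (ha : a ≠ ⊤) (hb : b ≠ ⊤) (hc : 0 ≤ c)
    (hab : a ≤ b + ENNReal.ofReal c) (hba : b ≤ a + ENNReal.ofReal c) :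
    |a.toReal - b.toReal| ≤ c := by
  have h₁ := ENNReal.toReal_mono (by finiteness) hab
  have h₂ := ENNReal.toReal_mono (by finiteness) hba
  rw [ENNReal.toReal_add hb ofReal_ne_top, ENNReal.toReal_ofReal hc] at h₁
  rw [ENNReal.toReal_add ha ofReal_ne_top, ENNReal.toReal_ofReal hc] at h₂
  exact abs_sub_le_iff.2 ⟨by linarith, by linarith⟩

def cpPartialSum {Ω : Type*} (X : ℕ → Ω → ℕ) (n : ℕ) : Ω → ℕ :=
  ∑ j ∈ range n, fun ω => (j + 1) * X j ω

lemma cpSum_eq_cpPartialSum {Ω : Type*} {X : ℕ → Ω → ℕ} {n : ℕ} {ω : Ω}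
    (h : ∀ j, n ≤ j → X j ω = 0) : cpSum X ω = cpPartialSum X n ω := by
  rw [cpSum, tsum_eq_sum (s := range n) fun j hj => by simp [h j (by simpa using hj)],
    cpPartialSum, Finset.sum_apply]
  push_cast
  rfl

lemma measurable_cpPartialSum {Ω : Type*} [MeasurableSpace Ω] {X : ℕ → Ω → ℕ}
    (hX : ∀ j, Measurable (X j)) (n : ℕ) : Measurable (cpPartialSum X n) := by
  rw [cpPartialSum, Finset.sum_fn]
  exact Finset.measurable_sum _ fun j _ => (measurable_of_countable _).comp (hX j)

lemma measure_natCast_cpPartialSum_mem_image {Ω : Type*} [MeasurableSpace Ω] (P : Measure Ω)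
    {X : ℕ → Ω → ℕ} (hX : ∀ j, Measurable (X j)) (n : ℕ) (A : Set ℕ) :
    P {ω | (cpPartialSum X n ω : ℝ≥0∞) ∈ (fun k : ℕ => (k : ℝ≥0∞)) '' A} =
      P.map (cpPartialSum X n) A := by
  rw [Measure.map_apply (measurable_cpPartialSum hX n) (MeasurableSet.of_discrete)]
  simp only [Nat.cast_injective.mem_set_image]
  rfl

namespace IsIndepPoissonFamily

variable {Ω Ω' : Type*} [MeasurableSpace Ω] [MeasurableSpace Ω'] {P : Measure Ω}
  {P' : Measure Ω'} {lam lam' : ℕ → ℝ} {X : ℕ → Ω → ℕ} {X' : ℕ → Ω' → ℕ}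

lemma map_eq (hX : IsIndepPoissonFamily P lam X) (hlam : ∀ j, 0 ≤ lam j) (j : ℕ) :
    P.map (X j) = Po((lam j).toNNReal) := by
  refine Measure.ext_of_singleton fun k => ?_
  rw [Measure.map_apply (hX.1 j) (measurableSet_singleton k), poissonMeasure_singleton,
    Real.coe_toNNReal _ (hlam j)]
  exact hX.2.2 j k

lemma measure_ne_zero_le (hX : IsIndepPoissonFamily P lam X) (hlam : ∀ j, 0 ≤ lam j) (j : ℕ) :
    P {ω | X j ω ≠ 0} ≤ ENNReal.ofReal (lam j) := by
  have := poissonMeasure_compl_zero_le (lam j).toNNReal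
  rwa [← hX.map_eq hlam, Measure.map_apply (hX.1 j) (measurableSet_singleton 0).compl] at this

lemma measure_cpSum_ne_cpPartialSum_le (hX : IsIndepPoissonFamily P lam X)
    (hlam : ∀ j, 0 ≤ lam j) (n : ℕ) :
    P {ω | cpSum X ω ≠ cpPartialSum X n ω} ≤ ∑' i, ENNReal.ofReal (lam (i + n)) :=
  calc P {ω | cpSum X ω ≠ cpPartialSum X n ω} ≤ P (⋃ i, {ω | X (i + n) ω ≠ 0}) :=
        measure_mono fun ω hω => by
          by_contra h
          simp only [Set.mem_iUnion, Set.mem_ofPred_eq, not_exists, not_not] at h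
          exact hω <| cpSum_eq_cpPartialSum fun j hj => by
            simpa [Nat.sub_add_cancel hj] using h (j - n)
    _ ≤ ∑' i, P {ω | X (i + n) ω ≠ 0} := measure_iUnion_le _
    _ ≤ ∑' i, ENNReal.ofReal (lam (i + n)) :=
        ENNReal.tsum_le_tsum fun i => hX.measure_ne_zero_le hlam _

lemma ae_cpSum_lt_top (hX : IsIndepPoissonFamily P lam X) (hlam : ∀ j, 0 ≤ lam j)
    (hsum : Summable lam) : ∀ᵐ ω ∂P, cpSum X ω < ⊤ := by
  refine ae_iff.2 <| le_antisymm (ge_of_tendsto' (ENNReal.tendsto_tsum_ofReal_nat_add hlam hsum)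
    fun n => ?_) zero_le
  refine (measure_mono fun ω hω h => ?_).trans (hX.measure_cpSum_ne_cpPartialSum_le hlam n)
  exact hω (h ▸ natCast_lt_top _)

lemma tvClose_map_cpPartialSum [IsProbabilityMeasure P] [IsProbabilityMeasure P']
    (hX : IsIndepPoissonFamily P lam X) (hX' : IsIndepPoissonFamily P' lam' X')
    (hlam : ∀ j, 0 ≤ lam j) (hlam' : ∀ j, 0 ≤ lam' j) (n : ℕ) :
    TVClose (P.map (cpPartialSum X n)) (P'.map (cpPartialSum X' n))
      (∑ j ∈ range n, ENNReal.ofReal |lam j - lam' j|) := by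
  have hmul : ∀ j : ℕ, Measurable fun k : ℕ => (j + 1) * k := fun j => measurable_of_countable _
  refine tvClose_map_sum_range (fun j => (hmul j).comp (hX.1 j)) (fun j => (hmul j).comp (hX'.1 j))
    (hX.2.1.comp _ hmul) (hX'.2.1.comp _ hmul) (fun j => ?_) n
  rw [← Measure.map_map (hmul j) (hX.1 j), ← Measure.map_map (hmul j) (hX'.1 j),
    hX.map_eq hlam, hX'.map_eq hlam']
  convert (tvClose_poissonMeasure _ _).map (hmul j) using 1
  rw [edist_dist, NNReal.dist_eq, Real.coe_toNNReal _ (hlam j), Real.coe_toNNReal _ (hlam' j)]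

lemma measure_cpSum_mem_le_map_add (hX : IsIndepPoissonFamily P lam X) (hlam : ∀ j, 0 ≤ lam j)
    (n : ℕ) (A : Set ℕ) :
    P {ω | cpSum X ω ∈ (fun k : ℕ => (k : ℝ≥0∞)) '' A} ≤
      P.map (cpPartialSum X n) A + ∑' i, ENNReal.ofReal (lam (i + n)) := by
  rw [← measure_natCast_cpPartialSum_mem_image P hX.1]
  exact (measure_le_measure_add_measure_ne P _ _ _).trans
    (by gcongr; exact hX.measure_cpSum_ne_cpPartialSum_le hlam n)

lemma map_le_measure_cpSum_mem_add (hX : IsIndepPoissonFamily P lam X) (hlam : ∀ j, 0 ≤ lam j)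
    (n : ℕ) (A : Set ℕ) :
    P.map (cpPartialSum X n) A ≤
      P {ω | cpSum X ω ∈ (fun k : ℕ => (k : ℝ≥0∞)) '' A} + ∑' i, ENNReal.ofReal (lam (i + n)) := by
  rw [← measure_natCast_cpPartialSum_mem_image P hX.1]
  refine (measure_le_measure_add_measure_ne P _ (cpSum X) _).trans ?_
  simp_rw [ne_comm]
  gcongr
  exact hX.measure_cpSum_ne_cpPartialSum_le hlam n

lemma measure_cpSum_mem_le [IsProbabilityMeasure P] [IsProbabilityMeasure P']
    (hX : IsIndepPoissonFamily P lam X) (hX' : IsIndepPoissonFamily P' lam' X')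
    (hlam : ∀ j, 0 ≤ lam j) (hlam' : ∀ j, 0 ≤ lam' j) (hsum : Summable lam)
    (hsum' : Summable lam') (A : Set ℕ) :
    P {ω | cpSum X ω ∈ (fun k : ℕ => (k : ℝ≥0∞)) '' A} ≤
      P' {ω | cpSum X' ω ∈ (fun k : ℕ => (k : ℝ≥0∞)) '' A} +
        ∑' j, ENNReal.ofReal |lam j - lam' j| := by
  set a := P {ω | cpSum X ω ∈ (fun k : ℕ => (k : ℝ≥0∞)) '' A}
  set a' := P' {ω | cpSum X' ω ∈ (fun k : ℕ => (k : ℝ≥0∞)) '' A}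
  set t := fun n => ∑' i, ENNReal.ofReal (lam (i + n))
  set t' := fun n => ∑' i, ENNReal.ofReal (lam' (i + n))
  set D := ∑' j, ENNReal.ofReal |lam j - lam' j|
  have hbound : ∀ n, a ≤ a' + D + (t n + t' n) := fun n =>
    calc a ≤ P.map (cpPartialSum X n) A + t n := hX.measure_cpSum_mem_le_map_add hlam n A
      _ ≤ P'.map (cpPartialSum X' n) A + ∑ j ∈ range n, ENNReal.ofReal |lam j - lam' j| + t n := by
          gcongr
          exact (hX.tvClose_map_cpPartialSum hX' hlam hlam' n A .of_discrete).1
      _ ≤ a' + t' n + D + t n := by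
          gcongr
          · exact hX'.map_le_measure_cpSum_mem_add hlam' n A
          · exact ENNReal.sum_le_tsum _
      _ = a' + D + (t n + t' n) := by ring
  refine ge_of_tendsto' (x := atTop) ?_ hbound
  simpa using tendsto_const_nhds.add ((ENNReal.tendsto_tsum_ofReal_nat_add hlam hsum).add
    (ENNReal.tendsto_tsum_ofReal_nat_add hlam' hsum'))

end IsIndepPoissonFamily

/-- Lemma 6.2, `LB`, of the paper.
If `(X_j)` and `(X'_j)` are families of independent Poisson variables with summable mean
sequences `λ`, `λ'`, then the compound Poisson sums `W = ∑ j·X_j` and `W' = ∑ j·X'_j` are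
a.s. finite and `|P(W ∈ A) − P(W' ∈ A)| ≤ ∑_j |λ_j − λ'_j|` for every `A ⊆ ℕ`;
i.e. `d_TV(CPo(λ), CPo(λ')) ≤ ‖λ − λ'‖`. -/
theorem stmt13 {Ω : Type*} [MeasurableSpace Ω] (P : Measure Ω) [IsProbabilityMeasure P]
    (lam lam' : ℕ → ℝ) (hlam0 : ∀ j, 0 ≤ lam j) (hlam'0 : ∀ j, 0 ≤ lam' j)
    (hsum : Summable lam) (hsum' : Summable lam')
    (X X' : ℕ → Ω → ℕ)
    (hX : IsIndepPoissonFamily P lam X) (hX' : IsIndepPoissonFamily P lam' X') :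
    (∀ᵐ ω ∂P, cpSum X ω < ⊤) ∧ (∀ᵐ ω ∂P, cpSum X' ω < ⊤) ∧
    ∀ A : Set ℕ,
      |(P {ω | cpSum X ω ∈ (fun k : ℕ => (k : ℝ≥0∞)) '' A}).toReal -
        (P {ω | cpSum X' ω ∈ (fun k : ℕ => (k : ℝ≥0∞)) '' A}).toReal| ≤
      ∑' j, |lam j - lam' j| := by
  refine ⟨hX.ae_cpSum_lt_top hlam0 hsum, hX'.ae_cpSum_lt_top hlam'0 hsum', fun A => ?_⟩
  have hL : ENNReal.ofReal (∑' j, |lam j - lam' j|) = ∑' j, ENNReal.ofReal |lam j - lam' j| :=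
    ENNReal.ofReal_tsum_of_nonneg (fun j => abs_nonneg _) (hsum.sub hsum').abs
  refine ENNReal.abs_toReal_sub_le (measure_ne_top _ _) (measure_ne_top _ _)
    (tsum_nonneg fun j => abs_nonneg _) ?_ ?_ <;> rw [hL]
  · exact hX.measure_cpSum_mem_le hX' hlam0 hlam'0 hsum hsum' A
  · simpa only [abs_sub_comm] using hX'.measure_cpSum_mem_le hX hlam'0 hlam0 hsum' hsum A
end
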